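/- arXiv:1607.08097 — 4 statements merged into one kernel-verified Lean document; each statement's English description precedes it below -/
import Mathlib

section
/- For each index k (indices mod n), the vector u_k ∈ ℝⁿ with i-th coordinate (α_i - α_k)(α_i - α_{k+1}) lies in the column space of the Euclidean distance matrix D defined by D_{ij} = (α_i - α_j)², provided the α_i are pairwise distinct and n ≥ 3. -/
/-- For indices mod `n`, the vector `u k` with `i`-th coordinate
`(α i - α k) * (α i - α (k+1))` lies in the span of the columns of the
Euclidean distance matrix `D i j = (α i - α j)^2`. -/
theorem stmt_2 (n : ℕ) [NeZero n] (hn : 3 ≤ n) (α : Fin n → ℝ)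
    (hα : Function.Injective α) (k : Fin n) :
    (fun i : Fin n => (α i - α k) * (α i - α (k + 1))) ∈
      Submodule.span ℝ (Set.range (Matrix.of fun i j : Fin n => (α i - α j) ^ 2).transpose) := by
  set M := (Matrix.of fun i j : Fin n => (α i - α j) ^ 2).transpose with hM
  set j0 : Fin n := ⟨0, by omega⟩
  set j1 : Fin n := ⟨1, by omega⟩
  set j2 : Fin n := ⟨2, by omega⟩
  set b0 := α j0
  set b1 := α j1
  set b2 := α j2
  have h01 : b1 - b0 ≠ 0 := sub_ne_zero.2 fun h => absurd (hα h) (by simp [j0, j1, Fin.ext_iff])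
  have h02 : b2 - b0 ≠ 0 := sub_ne_zero.2 fun h => absurd (hα h) (by simp [j0, j2, Fin.ext_iff])
  have h12 : b2 - b1 ≠ 0 := sub_ne_zero.2 fun h => absurd (hα h) (by simp [j1, j2, Fin.ext_iff])
  set A := α k
  set B := α (k + 1)
  set c0 : ℝ := (b1 * b2 - (A + B) * (b1 + b2) / 2 + A * B) / ((b1 - b0) * (b2 - b0))
  set c1 : ℝ := (b0 * b2 - (A + B) * (b0 + b2) / 2 + A * B) / ((b0 - b1) * (b2 - b1))
  set c2 : ℝ := (b0 * b1 - (A + B) * (b0 + b1) / 2 + A * B) / ((b0 - b2) * (b1 - b2))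
  have key : (fun i : Fin n => (α i - α k) * (α i - α (k + 1)))
      = c0 • M j0 + c1 • M j1 + c2 • M j2 := by
    funext i
    simp only [Pi.add_apply, Pi.smul_apply, smul_eq_mul, hM, Matrix.transpose_apply,
      Matrix.of_apply]
    have h10 : b0 - b1 ≠ 0 := fun h => h01 (by linarith [sub_eq_zero.1 h])
    have h20 : b0 - b2 ≠ 0 := fun h => h02 (by linarith [sub_eq_zero.1 h])
    have h21 : b1 - b2 ≠ 0 := fun h => h12 (by linarith [sub_eq_zero.1 h])
    simp only [c0, c1, c2]
    field_simp
    ring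
  rw [key]
  refine Submodule.add_mem _ (Submodule.add_mem _ ?_ ?_) ?_ <;>
    exact Submodule.smul_mem _ _ (Submodule.subset_span ⟨_, rfl⟩)
end

section
/- Let a, b, c be nonzero reals and λ + μ = 1. If h = λ w_{k-1} + μ w_k where w_{j} = (1/α_j + 1/α_{j+1} + 1/(α_j α_{j+1}), -1/α_j - 1/α_{j+1} + 1/(α_j α_{j+1})), then α_k is algebraic over the field ℚ(h_1, h_2) generated by the two coordinates of h. -/
set_option synthInstance.maxHeartbeats 1000000
set_option maxHeartbeats 2000000


/-- Let `a = α_{k-1}`, `b = α_k`, `c = α_{k+1}` be nonzero reals, `λ + μ = 1`, and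
`h = λ • w_{k-1} + μ • w_k` with `w_j = (1/α_j + 1/α_{j+1} + 1/(α_j α_{j+1}),
-1/α_j - 1/α_{j+1} + 1/(α_j α_{j+1}))`. Then `α_k` is algebraic over `ℚ(h₁, h₂)`. -/
theorem stmt_6 (a b c lam mu : ℝ) (ha : a ≠ 0) (hb : b ≠ 0) (hc : c ≠ 0)
    (hlm : lam + mu = 1)
    (h₁ h₂ : ℝ)
    (hh₁ : h₁ = lam * (1 / a + 1 / b + 1 / (a * b)) + mu * (1 / b + 1 / c + 1 / (b * c)))
    (hh₂ : h₂ = lam * (-(1 / a) - 1 / b + 1 / (a * b)) + mu * (-(1 / b) - 1 / c + 1 / (b * c))) :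
    IsAlgebraic (IntermediateField.adjoin ℚ ({h₁, h₂} : Set ℝ)) b := by
  set K := IntermediateField.adjoin ℚ ({h₁, h₂} : Set ℝ) with hK
  have m1 : h₁ ∈ K := IntermediateField.subset_adjoin ℚ _ (Set.mem_insert _ _)
  have m2 : h₂ ∈ K := IntermediateField.subset_adjoin ℚ _ (Set.mem_insert_of_mem _ rfl)
  have m2' : (2 : ℝ) ∈ K := by exact_mod_cast K.natCast_mem 2
  have me1 : (h₁ + h₂) / 2 ∈ K := div_mem (add_mem m1 m2) m2'
  have me2 : (h₁ - h₂) / 2 ∈ K := div_mem (sub_mem m1 m2) m2'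
  refine ⟨Polynomial.C ⟨(h₁ + h₂) / 2, me1⟩ * Polynomial.X ^ 2
      - Polynomial.C ⟨(h₁ - h₂) / 2, me2⟩ * Polynomial.X + 1, ?_, ?_⟩
  · intro h
    have := congrArg (Polynomial.coeff · 0) h
    simp [Polynomial.coeff_one] at this
  · have key : (h₁ + h₂) / 2 * b ^ 2 - (h₁ - h₂) / 2 * b + 1 = 0 := by
      subst hh₁ hh₂
      have hmu : mu = 1 - lam := by linarith
      subst hmu
      field_simp
      ring
    have : (Polynomial.aeval b) (Polynomial.C (⟨(h₁ + h₂) / 2, me1⟩ : K) * Polynomial.X ^ 2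
        - Polynomial.C (⟨(h₁ - h₂) / 2, me2⟩ : K) * Polynomial.X + 1)
        = (h₁ + h₂) / 2 * b ^ 2 - (h₁ - h₂) / 2 * b + 1 := by
      simp [IntermediateField.algebraMap_apply]
    rw [this, key]
end

section
/- With w_j = (1/α_j + 1/α_{j+1} + 1/(α_j α_{j+1}), -1/α_j - 1/α_{j+1} + 1/(α_j α_{j+1})), the determinant of the 3×3 matrix with rows (w_{i-1,1}, w_{i-1,2}, 1), (w_{i,1}, w_{i,2}, 1), (w_{k,1}, w_{k,2}, 1) equals [2(α_{i-1} - α_{i+1}) / (α_{i-1} α_i² α_{i+1})] · [1/(α_k α_{k+1})] · (α_i - α_k)(α_i - α_{k+1}). -/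
/-- Determinant identity for the slack matrix entries: with
`w j = (1/α_j + 1/α_{j+1} + 1/(α_j α_{j+1}), -1/α_j - 1/α_{j+1} + 1/(α_j α_{j+1}))`,
writing `a = α_{i-1}, b = α_i, c = α_{i+1}, d = α_k, e = α_{k+1}` (all nonzero),
the 3×3 determinant with rows `(w_{i-1}, 1), (w_i, 1), (w_k, 1)` equals
`(2(a - c)/(a b² c)) · (1/(d e)) · (b - d)(b - e)`. -/
theorem stmt_7 (a b c d e : ℝ) (ha : a ≠ 0) (hb : b ≠ 0) (hc : c ≠ 0)
    (hd : d ≠ 0) (he : e ≠ 0) :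
    Matrix.det !![1 / a + 1 / b + 1 / (a * b), -(1 / a) - 1 / b + 1 / (a * b), 1;
                  1 / b + 1 / c + 1 / (b * c), -(1 / b) - 1 / c + 1 / (b * c), 1;
                  1 / d + 1 / e + 1 / (d * e), -(1 / d) - 1 / e + 1 / (d * e), 1] =
      2 * (a - c) / (a * b ^ 2 * c) * (1 / (d * e)) * ((b - d) * (b - e)) := by
  rw [Matrix.det_fin_three]
  simp [Matrix.vecHead, Matrix.vecTail]
  field_simp
  ring
end

section
/- The i-th column of the normalized distance matrix D' lies in the convex hull of the two vectors v_{i-1} and v_i, where v_k is the normalization of u_k (with (u_k)_j = (α_j - α_k)(α_j - α_{k+1}), indices mod n). -/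
lemma aux_pos (n : ℕ) [NeZero n] (α : Fin n → ℝ) (hα : StrictMono α)
    (u : Fin n → Fin n → ℝ) (hu : ∀ k j, u k j = (α j - α k) * (α j - α (k + 1)))
    (k : Fin n) (hk : (k : ℕ) + 1 < n) (hsk : ∑ j, u k j ≠ 0) : 0 < ∑ j, u k j := by
  have hk1 : ((k + 1 : Fin n) : ℕ) = (k : ℕ) + 1 := by
    rw [Fin.add_def, Fin.val_one', Nat.mod_eq_of_lt (show 1 < n by omega)]
    exact Nat.mod_eq_of_lt hk
  have hkk : α k < α (k + 1) := hα (by rw [Fin.lt_def, hk1]; omega)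
  refine lt_of_le_of_ne (Finset.sum_nonneg fun j _ => ?_) (Ne.symm hsk)
  rw [hu]
  rcases le_or_gt (j : ℕ) (k : ℕ) with h | h
  · have h1 : α j ≤ α k := hα.monotone (Fin.le_def.mpr h)
    nlinarith
  · have h1 : α (k + 1) ≤ α j := hα.monotone (Fin.le_def.mpr (by omega))
    nlinarith

lemma aux_neg (n : ℕ) [NeZero n] (hn : 2 ≤ n) (α : Fin n → ℝ) (hα : StrictMono α)
    (u : Fin n → Fin n → ℝ) (hu : ∀ k j, u k j = (α j - α k) * (α j - α (k + 1)))
    (k : Fin n) (hk : (k : ℕ) + 1 = n) (hsk : ∑ j, u k j ≠ 0) : ∑ j, u k j < 0 := by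
  have hpos : 0 < n := by omega
  have hk1 : (k + 1 : Fin n) = ⟨0, hpos⟩ := by
    have h1 : ((k : ℕ) + 1 % n) % n = 0 := by
      rw [Nat.mod_eq_of_lt (show 1 < n by omega), hk, Nat.mod_self]
    rw [Fin.ext_iff, Fin.add_def, Fin.val_one']
    exact h1
  refine lt_of_le_of_ne (Finset.sum_nonpos fun j _ => ?_) hsk
  rw [hu, hk1]
  have h1 : α j ≤ α k := hα.monotone (Fin.le_def.mpr (by omega))
  have h2 : α ⟨0, hpos⟩ ≤ α j := hα.monotone (Fin.le_def.mpr (by simp))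
  nlinarith


/-- Column `i` of the column-normalized distance matrix `D'` is a convex combination of
`v (i-1)` and `v i`, where `v k` is the normalization of the vector `u k` with
`(u k) j = (α j - α k)(α j - α (k+1))` (indices mod `n`). -/
theorem stmt_15 (n : ℕ) [NeZero n] (hn : 3 ≤ n) (α : Fin n → ℝ) (hα : StrictMono α)
    (u : Fin n → Fin n → ℝ)
    (hu : ∀ k j, u k j = (α j - α k) * (α j - α (k + 1)))
    (hs : ∀ k, ∑ j, u k j ≠ 0)
    (v : Fin n → Fin n → ℝ)
    (hv : ∀ k, v k = fun j => u k j / ∑ j', u k j')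
    (i : Fin n) :
    (fun r => (α r - α i) ^ 2 / ∑ s, (α s - α i) ^ 2) ∈
      segment ℝ (v (i - 1)) (v i) := by
  have h1n : ((1 : Fin n) : ℕ) = 1 := by
    rw [Fin.val_one']; exact Nat.mod_eq_of_lt (by omega)
  set p : Fin n := i - 1 with hpdef
  set q : Fin n := i + 1 with hqdef
  have hp1 : p + 1 = i := by rw [hpdef]; exact sub_add_cancel i 1
  have hiv : (i : ℕ) < n := i.isLt
  -- value of q
  have hqval : (q : ℕ) = ((i : ℕ) + 1) % n := by
    rw [hqdef, Fin.add_def, h1n]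
  -- value of p
  have hpval : (p : ℕ) = if (i : ℕ) = 0 then n - 1 else (i : ℕ) - 1 := by
    rw [hpdef, Fin.coe_sub, h1n]
    split
    · next h => rw [h]; exact Nat.mod_eq_of_lt (by omega)
    · next h =>
        rw [show n - 1 + (i : ℕ) = (i : ℕ) - 1 + n by omega, Nat.add_mod_right]
        exact Nat.mod_eq_of_lt (by omega)
  set S : ℝ := ∑ s, (α s - α i) ^ 2 with hSdef
  set Sp : ℝ := ∑ j, u p j with hSpdef
  set Si : ℝ := ∑ j, u i j with hSidef
  have hSpne : Sp ≠ 0 := hs p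
  have hSine : Si ≠ 0 := hs i
  have hqi : q ≠ i := by
    intro h
    have : ((i : ℕ) + 1) % n = (i : ℕ) := by rw [← hqval, h]
    rcases Nat.lt_or_ge ((i : ℕ) + 1) n with h' | h'
    · rw [Nat.mod_eq_of_lt h'] at this; omega
    · rw [show (i:ℕ) + 1 = n by omega, Nat.mod_self] at this; omega
  have hS : 0 < S := by
    refine Finset.sum_pos' (fun j _ => sq_nonneg _) ⟨q, Finset.mem_univ _, ?_⟩
    exact sq_pos_of_ne_zero (sub_ne_zero.mpr fun h => hqi (hα.injective h))
  have hSne : S ≠ 0 := ne_of_gt hS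
  -- key pointwise identity
  have hkey : ∀ j, (α q - α i) * u p j + (α i - α p) * u i j
      = (α q - α p) * ((α j - α i) ^ 2) := by
    intro j
    rw [hu p j, hu i j, hp1]
    ring
  have hsum : (α q - α i) * Sp + (α i - α p) * Si = (α q - α p) * S := by
    rw [hSpdef, hSidef, hSdef, Finset.mul_sum, Finset.mul_sum, Finset.mul_sum,
      ← Finset.sum_add_distrib]
    exact Finset.sum_congr rfl fun j _ => hkey j
  set a : ℝ := (α q - α i) * Sp / ((α q - α p) * S) with hadef
  set b : ℝ := (α i - α p) * Si / ((α q - α p) * S) with hbdef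
  -- sign analysis
  have hsigns : 0 ≤ a ∧ 0 ≤ b ∧ α q - α p ≠ 0 := by
    rcases eq_or_ne (i : ℕ) 0 with h0 | h0
    · -- i = 0 : p = last, q has value 1
      have hpv : (p : ℕ) = n - 1 := by rw [hpval, if_pos h0]
      have hqv : (q : ℕ) = 1 := by rw [hqval, h0]; exact Nat.mod_eq_of_lt (by omega)
      have hSp : Sp < 0 := aux_neg n (by omega) α hα u hu p (by omega) hSpne
      have hSi : 0 < Si := aux_pos n α hα u hu i (by omega) hSine
      have h1 : α i < α q := hα (by rw [Fin.lt_def]; omega)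
      have h2 : α q < α p := hα (by rw [Fin.lt_def]; omega)
      have h3 : α i < α p := h1.trans h2
      have hden : (α q - α p) * S < 0 := mul_neg_of_neg_of_pos (by linarith) hS
      refine ⟨le_of_lt (div_pos_iff.mpr (Or.inr
          ⟨mul_neg_of_pos_of_neg (by linarith) hSp, hden⟩)),
        le_of_lt (div_pos_iff.mpr (Or.inr
          ⟨mul_neg_of_neg_of_pos (by linarith) hSi, hden⟩)),
        sub_ne_zero.mpr (ne_of_lt h2)⟩
    · rcases eq_or_ne ((i : ℕ) + 1) n with hl | hl
      · -- i = last : q = 0, p = n-2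
        have hpv : (p : ℕ) = (i : ℕ) - 1 := by rw [hpval, if_neg h0]
        have hqv : (q : ℕ) = 0 := by rw [hqval, hl, Nat.mod_self]
        have hSp : 0 < Sp := aux_pos n α hα u hu p (by omega) hSpne
        have hSi : Si < 0 := aux_neg n (by omega) α hα u hu i (by omega) hSine
        have h1 : α q < α p := hα (by rw [Fin.lt_def]; omega)
        have h2 : α p < α i := hα (by rw [Fin.lt_def]; omega)
        have h3 : α q < α i := h1.trans h2
        have hden : (α q - α p) * S < 0 := mul_neg_of_neg_of_pos (by linarith) hS
        refine ⟨le_of_lt (div_pos_iff.mpr (Or.inr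
            ⟨mul_neg_of_neg_of_pos (by linarith) hSp, hden⟩)),
          le_of_lt (div_pos_iff.mpr (Or.inr
            ⟨mul_neg_of_pos_of_neg (by linarith) hSi, hden⟩)),
          sub_ne_zero.mpr (ne_of_lt h1)⟩
      · -- interior
        have hpv : (p : ℕ) = (i : ℕ) - 1 := by rw [hpval, if_neg h0]
        have hqv : (q : ℕ) = (i : ℕ) + 1 := by
          rw [hqval]; exact Nat.mod_eq_of_lt (by omega)
        have hSp : 0 < Sp := aux_pos n α hα u hu p (by omega) hSpne
        have hSi : 0 < Si := aux_pos n α hα u hu i (by omega) hSine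
        have h1 : α p < α i := hα (by rw [Fin.lt_def]; omega)
        have h2 : α i < α q := hα (by rw [Fin.lt_def]; omega)
        have h3 : α p < α q := h1.trans h2
        have hden : 0 < (α q - α p) * S := mul_pos (by linarith) hS
        refine ⟨le_of_lt (div_pos_iff.mpr (Or.inl
            ⟨mul_pos (by linarith) hSp, hden⟩)),
          le_of_lt (div_pos_iff.mpr (Or.inl
            ⟨mul_pos (by linarith) hSi, hden⟩)),
          sub_ne_zero.mpr (ne_of_gt h3)⟩
  obtain ⟨ha, hb, hd⟩ := hsigns
  have hdSne : (α q - α p) * S ≠ 0 := mul_ne_zero hd hSne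
  refine ⟨a, b, ha, hb, ?_, ?_⟩
  · rw [hadef, hbdef, ← add_div, hsum]
    exact div_self hdSne
  · funext r
    have hvp : v p r = u p r / Sp := by rw [hv p]
    have hvi : v i r = u i r / Si := by rw [hv i]
    simp only [Pi.add_apply, Pi.smul_apply, smul_eq_mul, hvp, hvi]
    have e1 : a * (u p r / Sp) = (α q - α i) * u p r / ((α q - α p) * S) := by
      rw [hadef]; field_simp
    have e2 : b * (u i r / Si) = (α i - α p) * u i r / ((α q - α p) * S) := by
      rw [hbdef]; field_simp
    rw [e1, e2, ← add_div, hkey r, mul_div_mul_left _ _ hd]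
end
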